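/- The matrix function N is analytic on ℂ ∖ (−∞, 0] and solves the outer-parametrix Riemann–Hilbert problem: (i) for every x ∈ (−1, 0), the limits N₊(x) := lim_{ε→0⁺} N(x+iε) and N₋(x) := lim_{ε→0⁺} N(x−iε) exist and N₊(x) = N₋(x)·diag(e^{iαπ}, e^{−iαπ}); (ii) for every x < −1, the limits N₊(x) and N₋(x) (from the upper and lower half-planes) exist and N₊(x) = N₋(x)·[[0,1],[−1,0]]; (iii) N(z)·((I − iσ1)/√2)·diag(z^{1/4}, z^{−1/4}) → I as |z| → ∞ with z ∈ ℂ ∖ (−∞, 0], where z^{±1/4} are principal branches. -/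

import Mathlib

open Complex Set Filter Topology Matrix

/-- The Szegő-type function `D(z) = (((z+1)^{1/2} + 1)/((z+1)^{1/2} − 1))^{−α/2}`,
with all powers taken as principal branches. -/
noncomputable def DFun (α : ℝ) (z : ℂ) : ℂ :=
  ((((z + 1) ^ ((1 : ℂ) / 2) + 1) / ((z + 1) ^ ((1 : ℂ) / 2) - 1)) ^ (-(α : ℂ) / 2))

/-- The outer parametrix
`N(z) = [[1,0],[iα,1]] · diag((z+1)^{−1/4}, (z+1)^{1/4}) · (I + iσ₁)/√2 · diag(D(z), D(z)⁻¹)`. -/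
noncomputable def NFun (α : ℝ) (z : ℂ) : Matrix (Fin 2) (Fin 2) ℂ :=
  !![1, 0; (α : ℂ) * Complex.I, 1] *
    !![(z + 1) ^ (-(1 : ℂ) / 4), 0; 0, (z + 1) ^ ((1 : ℂ) / 4)] *
    ((1 / (Real.sqrt 2 : ℂ)) • !![1, Complex.I; Complex.I, 1]) *
    !![DFun α z, 0; 0, (DFun α z)⁻¹]

/-!
Write `w = (z + 1)^{1/2}` and `r = (w + 1)/(w - 1)` (`sqrtShift` and `szegoBase`), so that
`D = r^{-α/2}`. On the slit plane `r` avoids `(-∞, 0]`, so `N` is analytic there: since `Re w > 0`,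
`Im w` has the sign of `Im z` and `Im r = -2 Im w / |w - 1|²`, while for `z > 0` we have `|w| > 1`,
i.e. `Re r > 0`.

Across `(-1, 0)` only the cut of `r ↦ r^{-α/2}` is crossed: `r` is continuous there with negative
real values, approached from below when `z` comes from above and vice versa, so `D₊ = D₋ e^{iπα}`.
Across `(-∞, -1)` it is the cut of `(z + 1)^c`, whose boundary values differ by the factor
`e^{-2πic}`. Thus `w₋ = -w₊`, so `r₋ = r₊⁻¹` and `D₋ = D₊⁻¹`, while `(z + 1)^{-1/4}` and
`(z + 1)^{1/4}` pick up the factors `i` and `-i`; together these give the jump `[[0, 1], [-1, 0]]`.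

At infinity, `z^{1/4} (z + 1)^{-1/4} → 1` (as `log z - log (z + 1) = log (z / (z + 1)) → 0`),
`D → 1`, and `z^{1/4} (z + 1)^{1/4} (D - D⁻¹) → -2α`, which exactly cancels the entry `iα` of the
lower triangular factor.
-/

open Bornology
open scoped Real

section PrincipalSqrt

variable {ξ : ℂ}

lemma cpow_one_half_sq (ξ : ℂ) : (ξ ^ ((1 : ℂ) / 2)) ^ 2 = ξ := by
  simp [one_div]

lemma re_cpow_one_half_pos (hξ : ξ ∈ slitPlane) : 0 < (ξ ^ ((1 : ℂ) / 2)).re := by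
  rw [one_div, cpow_inv_two_re, Real.sqrt_pos]
  rcases mem_slitPlane_iff.1 hξ with hre | him
  · linarith [norm_nonneg ξ]
  · linarith [neg_abs_le ξ.re, abs_re_lt_norm.2 him]

lemma im_eq_two_mul_re_mul_im_cpow_one_half (ξ : ℂ) :
    ξ.im = 2 * (ξ ^ ((1 : ℂ) / 2)).re * (ξ ^ ((1 : ℂ) / 2)).im := by
  conv_lhs => rw [← cpow_one_half_sq ξ]
  rw [sq, mul_im]
  ring

lemma im_cpow_one_half_pos (hξ : 0 < ξ.im) : 0 < (ξ ^ ((1 : ℂ) / 2)).im := by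
  have hre := re_cpow_one_half_pos (mem_slitPlane_iff.2 (Or.inr hξ.ne'))
  rw [im_eq_two_mul_re_mul_im_cpow_one_half] at hξ
  exact pos_of_mul_pos_right hξ (by positivity)

lemma im_cpow_one_half_neg (hξ : ξ.im < 0) : (ξ ^ ((1 : ℂ) / 2)).im < 0 := by
  have hre := re_cpow_one_half_pos (mem_slitPlane_iff.2 (Or.inr hξ.ne))
  rw [im_eq_two_mul_re_mul_im_cpow_one_half] at hξ
  exact neg_of_mul_neg_right hξ (by positivity)

lemma im_cpow_one_half_ne_zero_of_re_neg (hξ : ξ.re < 0) : (ξ ^ ((1 : ℂ) / 2)).im ≠ 0 := by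
  intro him
  have hre : ξ.re = (ξ ^ ((1 : ℂ) / 2)).re ^ 2 := by
    conv_lhs => rw [← cpow_one_half_sq ξ]
    rw [sq, mul_re, him]
    ring
  nlinarith

lemma normSq_cpow_one_half (ξ : ℂ) : normSq (ξ ^ ((1 : ℂ) / 2)) = ‖ξ‖ := by
  conv_rhs => rw [← cpow_one_half_sq ξ]
  rw [normSq_eq_norm_sq, norm_pow]

end PrincipalSqrt

lemma im_add_one_div_sub_one (w : ℂ) : ((w + 1) / (w - 1)).im = -2 * w.im / normSq (w - 1) := by
  simp only [div_im, add_re, add_im, sub_re, sub_im, one_re, one_im]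
  ring

lemma re_add_one_div_sub_one (w : ℂ) :
    ((w + 1) / (w - 1)).re = (normSq w - 1) / normSq (w - 1) := by
  simp only [div_re, add_re, add_im, sub_re, sub_im, one_re, one_im, normSq_apply]
  ring

lemma setOf_not_im_eq_zero_and_re_nonpos : {z : ℂ | ¬(z.im = 0 ∧ z.re ≤ 0)} = slitPlane := by
  ext z
  simp only [mem_ofPred_eq, mem_slitPlane_iff, not_and_or, not_le]
  tauto

lemma inv_mem_slitPlane {z : ℂ} (hz : z ∈ slitPlane) : z⁻¹ ∈ slitPlane := by
  have hn : 0 < normSq z := normSq_pos.2 (slitPlane_ne_zero hz)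
  rcases mem_slitPlane_iff.1 hz with h | h
  · exact mem_slitPlane_iff.2 (Or.inl (by rw [inv_re]; positivity))
  · exact mem_slitPlane_iff.2 (Or.inr (by rw [inv_im]; exact div_ne_zero (neg_ne_zero.2 h) hn.ne'))

lemma add_one_mem_slitPlane {z : ℂ} (hz : z ∈ slitPlane) : z + 1 ∈ slitPlane := by
  rcases mem_slitPlane_iff.1 hz with h | h
  · exact mem_slitPlane_iff.2 (Or.inl (by simp; linarith))
  · exact mem_slitPlane_iff.2 (Or.inr (by simpa using h))

section Infinity

variable {z : ℂ}

lemma abs_arg_sub_arg_add_one_lt (hz : z ∈ slitPlane) : |arg z - arg (z + 1)| < π := by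
  have hz₁ := add_one_mem_slitPlane hz
  have h₀ : arg z < π := (arg_le_pi z).lt_of_ne (mem_slitPlane_iff_arg.1 hz).1
  have h₁ : arg (z + 1) < π := (arg_le_pi _).lt_of_ne (mem_slitPlane_iff_arg.1 hz₁).1
  have him : (z + 1).im = z.im := by simp
  rw [abs_sub_lt_iff]
  rcases le_or_gt 0 z.im with h | h
  · have := arg_nonneg_iff.2 h
    have := arg_nonneg_iff.2 (him ▸ h)
    constructor <;> linarith
  · have := arg_neg_iff.2 h
    have := arg_neg_iff.2 (him ▸ h)
    have := neg_pi_lt_arg z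
    have := neg_pi_lt_arg (z + 1)
    constructor <;> linarith

lemma div_add_one_cpow (hz : z ∈ slitPlane) (c : ℂ) :
    (z / (z + 1)) ^ c = z ^ c * (z + 1) ^ (-c) := by
  have hz₁ := add_one_mem_slitPlane hz
  have harg : arg (z + 1) ≠ π := (mem_slitPlane_iff_arg.1 hz₁).1
  have hlog : log (z / (z + 1)) = log z - log (z + 1) := by
    rw [div_eq_mul_inv, log_mul (slitPlane_ne_zero hz) (inv_ne_zero (slitPlane_ne_zero hz₁)),
      log_inv _ harg, sub_eq_add_neg]
    rw [arg_inv, if_neg harg, ← sub_eq_add_neg]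
    have := abs_lt.1 (abs_arg_sub_arg_add_one_lt hz)
    exact ⟨this.1, this.2.le⟩
  rw [cpow_def_of_ne_zero (div_ne_zero (slitPlane_ne_zero hz) (slitPlane_ne_zero hz₁)), hlog,
    cpow_def_of_ne_zero (slitPlane_ne_zero hz), cpow_def_of_ne_zero (slitPlane_ne_zero hz₁),
    ← exp_add]
  ring_nf

lemma tendsto_div_add_one_cobounded : Tendsto (fun z : ℂ => z / (z + 1)) (cobounded ℂ) (𝓝 1) := by
  have hinv : Tendsto (fun z : ℂ => (z + 1)⁻¹) (cobounded ℂ) (𝓝 0) :=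
    tendsto_inv₀_cobounded.comp (tendsto_add_const_cobounded 1)
  have h : Tendsto (fun z : ℂ => 1 - (z + 1)⁻¹) (cobounded ℂ) (𝓝 1) := by
    simpa using tendsto_const_nhds.sub hinv
  refine h.congr' ?_
  filter_upwards [(tendsto_add_const_cobounded (1 : ℂ)).eventually_ne_cobounded 0] with z hz
  field_simp
  ring

lemma tendsto_cpow_mul_add_one_cpow_neg (c : ℂ) :
    Tendsto (fun z : ℂ => z ^ c * (z + 1) ^ (-c)) (cobounded ℂ ⊓ 𝓟 slitPlane) (𝓝 1) := by
  have h := (continuousAt_cpow_const (b := c) one_mem_slitPlane).tendsto.comp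
    (tendsto_div_add_one_cobounded.mono_left (inf_le_left (b := 𝓟 slitPlane)))
  rw [one_cpow] at h
  exact h.congr' (eventually_inf_principal.2 (.of_forall fun z hz => div_add_one_cpow hz c))

lemma tendsto_cpow_ofReal_cobounded {y : ℝ} (hy : 0 < y) :
    Tendsto (· ^ (y : ℂ)) (cobounded ℂ) (cobounded ℂ) := by
  rw [← tendsto_norm_atTop_iff_cobounded]
  simp_rw [norm_cpow_real]
  exact (tendsto_rpow_atTop hy).comp tendsto_norm_cobounded_atTop

lemma tendsto_cpow_ofReal_cobounded_nhds_zero {y : ℝ} (hy : y < 0) :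
    Tendsto (· ^ (y : ℂ)) (cobounded ℂ) (𝓝 0) := by
  rw [tendsto_zero_iff_norm_tendsto_zero]
  simp_rw [norm_cpow_real]
  simpa [Function.comp_def] using
    (tendsto_rpow_neg_atTop (neg_pos.2 hy)).comp tendsto_norm_cobounded_atTop

lemma hasDerivAt_cpow_neg_sub_cpow (a : ℂ) :
    HasDerivAt (fun t : ℂ => t ^ (-a) - t ^ a) (-2 * a) 1 := by
  have h := ((hasStrictDerivAt_cpow_const (c := -a) one_mem_slitPlane).hasDerivAt).sub
    (hasStrictDerivAt_cpow_const (c := a) one_mem_slitPlane).hasDerivAt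
  simp only [one_cpow, mul_one] at h
  rwa [show -2 * a = -a - a by ring]

end Infinity

section BoundaryValues

lemma tendsto_ofReal_add_mul_I_nhdsGT (x : ℝ) :
    Tendsto (fun ε : ℝ => (x : ℂ) + ε * I) (𝓝[>] 0) (𝓝[{z | 0 < z.im}] (x : ℂ)) := by
  refine tendsto_nhdsWithin_iff.2
    ⟨?_, eventually_nhdsWithin_of_forall fun ε hε => by simpa using hε⟩
  have h : Tendsto (fun ε : ℝ => (x : ℂ) + ε * I) (𝓝 0) (𝓝 ((x : ℂ) + (0 : ℝ) * I)) :=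
    (continuous_const.add (continuous_ofReal.mul continuous_const)).tendsto 0
  simpa using h.mono_left nhdsWithin_le_nhds

lemma tendsto_ofReal_sub_mul_I_nhdsGT (x : ℝ) :
    Tendsto (fun ε : ℝ => (x : ℂ) - ε * I) (𝓝[>] 0) (𝓝[{z | z.im < 0}] (x : ℂ)) := by
  refine tendsto_nhdsWithin_iff.2
    ⟨?_, eventually_nhdsWithin_of_forall fun ε hε => by simpa using hε⟩
  have h : Tendsto (fun ε : ℝ => (x : ℂ) - ε * I) (𝓝 0) (𝓝 ((x : ℂ) - (0 : ℝ) * I)) :=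
    (continuous_const.sub (continuous_ofReal.mul continuous_const)).tendsto 0
  simpa using h.mono_left nhdsWithin_le_nhds

lemma tendsto_add_ofReal_nhdsWithin_im (p : ℝ → Prop) (a : ℂ) (t : ℝ) :
    Tendsto (· + (t : ℂ)) (𝓝[{z | p z.im}] a) (𝓝[{z | p z.im}] (a + t)) :=
  tendsto_nhdsWithin_iff.2 ⟨((continuous_add_const _).tendsto a).mono_left nhdsWithin_le_nhds,
    eventually_nhdsWithin_of_forall fun z hz => by simpa using hz⟩

variable {ζ : ℂ}

lemma tendsto_cpow_const_nhdsWithin_im_nonneg (hre : ζ.re < 0) (him : ζ.im = 0) (c : ℂ) :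
    Tendsto (· ^ c) (𝓝[{z | 0 ≤ z.im}] ζ) (𝓝 (ζ ^ c)) := by
  have hζ : ζ ≠ 0 := fun h => by simp [h] at hre
  have hlog := (continuousWithinAt_log_of_re_neg_of_im_zero hre him).tendsto
  rw [cpow_def_of_ne_zero hζ]
  refine ((continuous_exp.tendsto _).comp (hlog.mul_const c)).congr' ?_
  filter_upwards [nhdsWithin_le_nhds (eventually_ne_nhds hζ)] with z hz
  rw [Function.comp_apply, cpow_def_of_ne_zero hz]

lemma tendsto_cpow_const_nhdsWithin_im_neg (hre : ζ.re < 0) (him : ζ.im = 0) (c : ℂ) :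
    Tendsto (· ^ c) (𝓝[{z | z.im < 0}] ζ) (𝓝 (ζ ^ c * exp (-(2 * π * I * c)))) := by
  have hζ : ζ ≠ 0 := fun h => by simp [h] at hre
  have hlog := tendsto_log_nhdsWithin_im_neg_of_re_neg_of_im_zero hre him
  have hval : ζ ^ c * exp (-(2 * π * I * c)) = exp ((Real.log ‖ζ‖ - π * I) * c) := by
    rw [cpow_def_of_ne_zero hζ, ← exp_add, log, arg_eq_pi_iff.2 ⟨hre, him⟩]
    ring_nf
  rw [hval]
  refine ((continuous_exp.tendsto _).comp (hlog.mul_const c)).congr' ?_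
  filter_upwards [nhdsWithin_le_nhds (eventually_ne_nhds hζ)] with z hz
  rw [Function.comp_apply, cpow_def_of_ne_zero hz]

end BoundaryValues

section MatrixEntries

variable {𝕜 : Type*} [NontriviallyNormedField 𝕜] {m n p : Type*} [Fintype n] {z : 𝕜}

lemma analyticAt_matrix_mul_apply {M : 𝕜 → Matrix m n 𝕜} {N : 𝕜 → Matrix n p 𝕜}
    (hM : ∀ i j, AnalyticAt 𝕜 (fun z => M z i j) z) (hN : ∀ i j, AnalyticAt 𝕜 (fun z => N z i j) z)
    (i : m) (j : p) : AnalyticAt 𝕜 (fun z => (M z * N z) i j) z := by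
  simp only [Matrix.mul_apply]
  exact Finset.analyticAt_fun_sum _ fun k _ => (hM i k).mul (hN k j)

lemma analyticAt_matrix_fin_two {a b c d : 𝕜 → 𝕜} (ha : AnalyticAt 𝕜 a z) (hb : AnalyticAt 𝕜 b z)
    (hc : AnalyticAt 𝕜 c z) (hd : AnalyticAt 𝕜 d z) (i j : Fin 2) :
    AnalyticAt 𝕜 (fun z => !![a z, b z; c z, d z] i j) z := by
  fin_cases i <;> fin_cases j <;> assumption

lemma tendsto_matrix_fin_two {β R : Type*} [TopologicalSpace R] {l : Filter β} {a b c d : β → R}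
    {a₀ b₀ c₀ d₀ : R} (ha : Tendsto a l (𝓝 a₀)) (hb : Tendsto b l (𝓝 b₀))
    (hc : Tendsto c l (𝓝 c₀)) (hd : Tendsto d l (𝓝 d₀)) :
    Tendsto (fun x => !![a x, b x; c x, d x]) l (𝓝 !![a₀, b₀; c₀, d₀]) := by
  refine tendsto_pi_nhds.2 fun i => tendsto_pi_nhds.2 fun j => ?_
  fin_cases i <;> fin_cases j <;> assumption

end MatrixEntries

namespace OuterParametrix

variable {α x : ℝ} {z : ℂ}

noncomputable def sqrtShift (z : ℂ) : ℂ := (z + 1) ^ ((1 : ℂ) / 2)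

noncomputable def szegoBase (z : ℂ) : ℂ := (sqrtShift z + 1) / (sqrtShift z - 1)

lemma DFun_eq (α : ℝ) (z : ℂ) : DFun α z = szegoBase z ^ (-(α : ℂ) / 2) := rfl

lemma DFun_inv (α : ℝ) (z : ℂ) : (DFun α z)⁻¹ = szegoBase z ^ ((α : ℂ) / 2) := by
  rw [DFun_eq, neg_div, cpow_neg, inv_inv]

lemma sqrtShift_ne_one (hz : z ∈ slitPlane) : sqrtShift z ≠ 1 := by
  intro h
  have h1 : z + 1 = 1 := by rw [← cpow_one_half_sq (z + 1), ← sqrtShift, h, one_pow]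
  exact slitPlane_ne_zero hz (by linear_combination h1)

lemma im_szegoBase_ne_zero (hw : (sqrtShift z).im ≠ 0) : (szegoBase z).im ≠ 0 := by
  rw [szegoBase, im_add_one_div_sub_one]
  have hw₁ : sqrtShift z - 1 ≠ 0 := sub_ne_zero.2 fun h => by simp [h] at hw
  exact div_ne_zero (by simpa using hw) (normSq_eq_zero.not.2 hw₁)

lemma szegoBase_mem_slitPlane (hz : z ∈ slitPlane) : szegoBase z ∈ slitPlane := by
  rcases mem_slitPlane_iff.1 hz with hre | him
  · refine mem_slitPlane_iff.2 (Or.inl ?_)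
    have h1 : 1 < ‖z + 1‖ := by
      calc (1 : ℝ) < (z + 1).re := by simp; linarith
        _ ≤ ‖z + 1‖ := re_le_norm _
    rw [szegoBase, re_add_one_div_sub_one, sqrtShift, normSq_cpow_one_half]
    exact div_pos (by linarith) (normSq_pos.2 (sub_ne_zero.2 (sqrtShift_ne_one hz)))
  · refine mem_slitPlane_iff.2 (Or.inr (im_szegoBase_ne_zero fun h => him ?_))
    have h1 := im_eq_two_mul_re_mul_im_cpow_one_half (z + 1)
    rwa [← sqrtShift, h, mul_zero, add_im, one_im, add_zero] at h1

lemma DFun_ne_zero (hz : szegoBase z ≠ 0) : DFun α z ≠ 0 := by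
  rw [DFun_eq, Ne, cpow_eq_zero_iff, not_and_or]
  exact Or.inl hz

lemma analyticAt_add_one_cpow (c : ℂ) (hz : z + 1 ∈ slitPlane) :
    AnalyticAt ℂ (fun z : ℂ => (z + 1) ^ c) z :=
  (analyticAt_id.add analyticAt_const).cpow analyticAt_const hz

lemma analyticAt_szegoBase (hz : z + 1 ∈ slitPlane) (hw : sqrtShift z ≠ 1) :
    AnalyticAt ℂ szegoBase z :=
  have hsqrt : AnalyticAt ℂ sqrtShift z := analyticAt_add_one_cpow _ hz
  (hsqrt.add analyticAt_const).div (hsqrt.sub analyticAt_const) (sub_ne_zero.2 hw)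

lemma analyticAt_DFun (hz : z ∈ slitPlane) : AnalyticAt ℂ (DFun α) z :=
  (analyticAt_szegoBase (add_one_mem_slitPlane hz) (sqrtShift_ne_one hz)).cpow analyticAt_const
    (szegoBase_mem_slitPlane hz)

lemma analyticOnNhd_NFun_apply (α : ℝ) (i j : Fin 2) :
    AnalyticOnNhd ℂ (fun z => NFun α z i j) slitPlane := fun z hz => by
  have hconst {M : Matrix (Fin 2) (Fin 2) ℂ} : ∀ i j, AnalyticAt ℂ (fun _ : ℂ => M i j) z :=
    fun _ _ => analyticAt_const
  have hz₁ := add_one_mem_slitPlane hz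
  have hD := analyticAt_DFun (α := α) hz
  have hD' := hD.inv (DFun_ne_zero (slitPlane_ne_zero (szegoBase_mem_slitPlane hz)))
  exact analyticAt_matrix_mul_apply
    (analyticAt_matrix_mul_apply (analyticAt_matrix_mul_apply hconst
      (analyticAt_matrix_fin_two (analyticAt_add_one_cpow _ hz₁) analyticAt_const analyticAt_const
        (analyticAt_add_one_cpow _ hz₁))) hconst)
    (analyticAt_matrix_fin_two hD analyticAt_const analyticAt_const hD') i j

noncomputable def outerMatrix (α : ℝ) (A B D : ℂ) : Matrix (Fin 2) (Fin 2) ℂ :=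
  !![1, 0; (α : ℂ) * I, 1] * !![A, 0; 0, B] * ((1 / (Real.sqrt 2 : ℂ)) • !![1, I; I, 1]) *
    !![D, 0; 0, D⁻¹]

lemma NFun_eq_outerMatrix (α : ℝ) (z : ℂ) :
    NFun α z = outerMatrix α ((z + 1) ^ (-(1 : ℂ) / 4)) ((z + 1) ^ ((1 : ℂ) / 4)) (DFun α z) := rfl

lemma tendsto_outerMatrix {β : Type*} {l : Filter β} {A B D : β → ℂ} {A₀ B₀ D₀ : ℂ}
    (hA : Tendsto A l (𝓝 A₀)) (hB : Tendsto B l (𝓝 B₀)) (hD : Tendsto D l (𝓝 D₀)) (hD₀ : D₀ ≠ 0) :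
    Tendsto (fun x => outerMatrix α (A x) (B x) (D x)) l (𝓝 (outerMatrix α A₀ B₀ D₀)) :=
  ((tendsto_const_nhds.mul (tendsto_matrix_fin_two hA tendsto_const_nhds tendsto_const_nhds hB)).mul
    tendsto_const_nhds).mul
    (tendsto_matrix_fin_two hD tendsto_const_nhds tendsto_const_nhds (hD.inv₀ hD₀))

lemma outerMatrix_mul_eq (α : ℝ) (A B D e : ℂ) :
    outerMatrix α A B (D * e) = outerMatrix α A B D * !![e, 0; 0, e⁻¹] := by
  simp only [outerMatrix, Matrix.mul_assoc, mul_fin_two, mul_inv]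
  simp

lemma outerMatrix_eq_mul_jump (α : ℝ) (A B D : ℂ) :
    outerMatrix α A B D = outerMatrix α (A * I) (B * -I) D⁻¹ * !![0, 1; -1, 0] := by
  simp only [outerMatrix, mul_fin_two, Matrix.smul_of, Matrix.smul_cons, Matrix.smul_empty, inv_inv]
  ext i j
  fin_cases i <;> fin_cases j <;> simp <;> ring_nf <;> simp [I_sq]

lemma outerMatrix_mul_mul_eq (α : ℝ) (A B D E F : ℂ) :
    outerMatrix α A B D * ((1 / (Real.sqrt 2 : ℂ)) • !![1, -I; -I, 1]) * !![E, 0; 0, F] =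
      (1 / 2 : ℂ) • !![E * A * (D + D⁻¹), I * (A * F) * (D⁻¹ - D);
        I * (α * (E * A) * (D + D⁻¹) + E * B * (D - D⁻¹)),
        α * (A * F) * (D - D⁻¹) + B * F * (D + D⁻¹)] := by
  have h2 : (Real.sqrt 2 : ℂ) ^ 2 = 2 := by norm_cast; simp
  simp only [outerMatrix, mul_fin_two, Matrix.smul_of, Matrix.smul_cons, Matrix.smul_empty]
  ext i j
  fin_cases i <;> fin_cases j <;> simp <;> ring_nf <;> simp [I_sq, h2] <;> ring

lemma im_szegoBase_neg (hz : 0 < z.im) : (szegoBase z).im < 0 := by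
  have hw : 0 < (sqrtShift z).im := im_cpow_one_half_pos (by simpa using hz)
  rw [szegoBase, im_add_one_div_sub_one]
  exact div_neg_of_neg_of_pos (by linarith)
    (normSq_pos.2 (sub_ne_zero.2 fun h => by simp [h] at hw))

lemma im_szegoBase_pos (hz : z.im < 0) : 0 < (szegoBase z).im := by
  have hw : (sqrtShift z).im < 0 := im_cpow_one_half_neg (by simpa using hz)
  rw [szegoBase, im_add_one_div_sub_one]
  exact div_pos (by linarith) (normSq_pos.2 (sub_ne_zero.2 fun h => by simp [h] at hw))

lemma sqrtShift_ofReal (hx : -1 ≤ x) : sqrtShift x = (√(x + 1) : ℝ) := by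
  rw [sqrtShift, Real.sqrt_eq_rpow, ofReal_cpow (by linarith)]
  norm_num

lemma szegoBase_ofReal (hx : -1 ≤ x) :
    szegoBase x = ((√(x + 1) + 1) / (√(x + 1) - 1) : ℝ) := by
  rw [szegoBase, sqrtShift_ofReal hx]
  push_cast
  rfl

lemma im_szegoBase_ofReal (hx : -1 ≤ x) : (szegoBase x).im = 0 := by
  rw [szegoBase_ofReal hx, ofReal_im]

lemma re_szegoBase_ofReal_neg (hx : x ∈ Ioo (-1 : ℝ) 0) : (szegoBase x).re < 0 := by
  rw [szegoBase_ofReal hx.1.le, ofReal_re]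
  exact div_neg_of_pos_of_neg (by positivity)
    (by linarith [(Real.sqrt_lt' one_pos).2 (by linarith [hx.2] : x + 1 < 1 ^ 2)])

lemma ofReal_add_one_mem_slitPlane (hx : -1 < x) : (x : ℂ) + 1 ∈ slitPlane :=
  mem_slitPlane_iff.2 (Or.inl (by simp; linarith))

lemma continuousAt_szegoBase_of_mem_Ioo (hx : x ∈ Ioo (-1 : ℝ) 0) :
    ContinuousAt szegoBase x := by
  refine (analyticAt_szegoBase (ofReal_add_one_mem_slitPlane hx.1) ?_).continuousAt
  rw [sqrtShift_ofReal hx.1.le]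
  exact_mod_cast ((Real.sqrt_lt' one_pos).2 (by linarith [hx.2])).ne

lemma tendsto_DFun_nhdsWithin_im_pos_of_mem_Ioo (hx : x ∈ Ioo (-1 : ℝ) 0) :
    Tendsto (DFun α) (𝓝[{z | 0 < z.im}] (x : ℂ)) (𝓝 (DFun α x * exp (α * π * I))) := by
  have hr : Tendsto szegoBase (𝓝[{z | 0 < z.im}] (x : ℂ)) (𝓝[{z | z.im < 0}] (szegoBase x)) :=
    tendsto_nhdsWithin_iff.2 ⟨(continuousAt_szegoBase_of_mem_Ioo hx).tendsto.mono_left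
      nhdsWithin_le_nhds, eventually_nhdsWithin_of_forall fun z => im_szegoBase_neg⟩
  have hexp : exp (α * π * I) = exp (-(2 * π * I * (-(α : ℂ) / 2))) := by congr 1; ring
  rw [DFun_eq, hexp]
  exact (tendsto_cpow_const_nhdsWithin_im_neg (re_szegoBase_ofReal_neg hx)
    (im_szegoBase_ofReal hx.1.le) _).comp hr

lemma tendsto_DFun_nhdsWithin_im_neg_of_mem_Ioo (hx : x ∈ Ioo (-1 : ℝ) 0) :
    Tendsto (DFun α) (𝓝[{z | z.im < 0}] (x : ℂ)) (𝓝 (DFun α x)) := by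
  have hr : Tendsto szegoBase (𝓝[{z | z.im < 0}] (x : ℂ)) (𝓝[{z | 0 ≤ z.im}] (szegoBase x)) :=
    tendsto_nhdsWithin_iff.2 ⟨(continuousAt_szegoBase_of_mem_Ioo hx).tendsto.mono_left
      nhdsWithin_le_nhds, eventually_nhdsWithin_of_forall fun z hz => (im_szegoBase_pos hz).le⟩
  exact (tendsto_cpow_const_nhdsWithin_im_nonneg (re_szegoBase_ofReal_neg hx)
    (im_szegoBase_ofReal hx.1.le) _).comp hr

lemma tendsto_add_one_cpow_nhdsWithin_im_pos (hx : x < -1) (c : ℂ) :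
    Tendsto (fun z : ℂ => (z + 1) ^ c) (𝓝[{z | 0 < z.im}] (x : ℂ)) (𝓝 (((x : ℂ) + 1) ^ c)) := by
  have h := (tendsto_cpow_const_nhdsWithin_im_nonneg (ζ := (x : ℂ) + 1) (by simp; linarith)
    (by simp) c).comp (tendsto_add_ofReal_nhdsWithin_im (0 ≤ ·) (x : ℂ) 1)
  rw [ofReal_one] at h
  exact h.mono_left (nhdsWithin_mono _ fun z (hz : 0 < z.im) => hz.le)

lemma tendsto_add_one_cpow_nhdsWithin_im_neg (hx : x < -1) (c : ℂ) :
    Tendsto (fun z : ℂ => (z + 1) ^ c) (𝓝[{z | z.im < 0}] (x : ℂ))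
      (𝓝 (((x : ℂ) + 1) ^ c * exp (-(2 * π * I * c)))) := by
  have h := (tendsto_cpow_const_nhdsWithin_im_neg (ζ := (x : ℂ) + 1) (by simp; linarith)
    (by simp) c).comp (tendsto_add_ofReal_nhdsWithin_im (· < 0) (x : ℂ) 1)
  rwa [ofReal_one] at h

lemma im_sqrtShift_ne_zero_of_lt_neg_one (hx : x < -1) : (sqrtShift x).im ≠ 0 :=
  im_cpow_one_half_ne_zero_of_re_neg (by simp; linarith)

lemma szegoBase_mem_slitPlane_of_lt_neg_one (hx : x < -1) : szegoBase x ∈ slitPlane :=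
  mem_slitPlane_iff.2 (Or.inr (im_szegoBase_ne_zero (im_sqrtShift_ne_zero_of_lt_neg_one hx)))

lemma tendsto_DFun_nhdsWithin_im_pos_of_lt_neg_one (hx : x < -1) :
    Tendsto (DFun α) (𝓝[{z | 0 < z.im}] (x : ℂ)) (𝓝 (DFun α x)) := by
  have hw := tendsto_add_one_cpow_nhdsWithin_im_pos hx ((1 : ℂ) / 2)
  have hw₁ : sqrtShift x - 1 ≠ 0 := fun h => im_sqrtShift_ne_zero_of_lt_neg_one hx (by
    simpa using congrArg im h)
  exact (continuousAt_cpow_const (szegoBase_mem_slitPlane_of_lt_neg_one hx)).tendsto.comp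
    ((hw.add tendsto_const_nhds).div (hw.sub tendsto_const_nhds) hw₁)

lemma tendsto_DFun_nhdsWithin_im_neg_of_lt_neg_one (hx : x < -1) :
    Tendsto (DFun α) (𝓝[{z | z.im < 0}] (x : ℂ)) (𝓝 (DFun α x)⁻¹) := by
  have hw := tendsto_add_one_cpow_nhdsWithin_im_neg hx ((1 : ℂ) / 2)
  have hexp : exp (-(2 * π * I * (1 / 2))) = -1 := by
    rw [show -(2 * π * I * (1 / 2)) = -(π * I) by ring, exp_neg_pi_mul_I]
  rw [hexp, mul_neg_one] at hw
  have hw₁ : -sqrtShift x - 1 ≠ 0 := fun h => im_sqrtShift_ne_zero_of_lt_neg_one hx (by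
    simpa using congrArg im h)
  have hr : (-sqrtShift x + 1) / (-sqrtShift x - 1) = (szegoBase x)⁻¹ := by
    rw [szegoBase, inv_div, ← neg_div_neg_eq]
    congr 1 <;> ring
  have hslit := szegoBase_mem_slitPlane_of_lt_neg_one hx
  rw [DFun_eq, ← inv_cpow _ _ (mem_slitPlane_iff_arg.1 hslit).1, ← hr]
  refine (continuousAt_cpow_const ?_).tendsto.comp
    ((hw.add tendsto_const_nhds).div (hw.sub tendsto_const_nhds) hw₁)
  rw [hr]
  exact inv_mem_slitPlane hslit

theorem NFun_jump_of_mem_Ioo (hx : x ∈ Ioo (-1 : ℝ) 0) :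
    ∃ Np Nm : Matrix (Fin 2) (Fin 2) ℂ,
      Tendsto (fun ε : ℝ => NFun α ((x : ℂ) + ε * I)) (𝓝[>] 0) (𝓝 Np) ∧
      Tendsto (fun ε : ℝ => NFun α ((x : ℂ) - ε * I)) (𝓝[>] 0) (𝓝 Nm) ∧
      Np = Nm * !![exp (α * π * I), 0; 0, exp (-(α * π * I))] := by
  have hpow (c : ℂ) {s : Set ℂ} :
      Tendsto (fun z : ℂ => (z + 1) ^ c) (𝓝[s] (x : ℂ)) (𝓝 (((x : ℂ) + 1) ^ c)) :=
    (analyticAt_add_one_cpow c (ofReal_add_one_mem_slitPlane hx.1)).continuousAt.tendsto.mono_left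
      nhdsWithin_le_nhds
  have hD₀ : DFun α x ≠ 0 := DFun_ne_zero fun h => (re_szegoBase_ofReal_neg hx).ne (by simp [h])
  have hup := tendsto_outerMatrix (α := α) (hpow (-(1 : ℂ) / 4)) (hpow ((1 : ℂ) / 4))
    (tendsto_DFun_nhdsWithin_im_pos_of_mem_Ioo hx) (mul_ne_zero hD₀ (exp_ne_zero _))
  have hdown := tendsto_outerMatrix (α := α) (hpow (-(1 : ℂ) / 4)) (hpow ((1 : ℂ) / 4))
    (tendsto_DFun_nhdsWithin_im_neg_of_mem_Ioo hx) hD₀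
  refine ⟨_, _, hup.comp (tendsto_ofReal_add_mul_I_nhdsGT x),
    hdown.comp (tendsto_ofReal_sub_mul_I_nhdsGT x), ?_⟩
  rw [outerMatrix_mul_eq, exp_neg]

theorem NFun_jump_of_lt_neg_one (hx : x < -1) :
    ∃ Np Nm : Matrix (Fin 2) (Fin 2) ℂ,
      Tendsto (fun ε : ℝ => NFun α ((x : ℂ) + ε * I)) (𝓝[>] 0) (𝓝 Np) ∧
      Tendsto (fun ε : ℝ => NFun α ((x : ℂ) - ε * I)) (𝓝[>] 0) (𝓝 Nm) ∧
      Np = Nm * !![0, 1; -1, 0] := by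
  have hD₀ : DFun α x ≠ 0 :=
    DFun_ne_zero (slitPlane_ne_zero (szegoBase_mem_slitPlane_of_lt_neg_one hx))
  have hup := tendsto_outerMatrix (α := α)
    (tendsto_add_one_cpow_nhdsWithin_im_pos hx (-(1 : ℂ) / 4))
    (tendsto_add_one_cpow_nhdsWithin_im_pos hx ((1 : ℂ) / 4))
    (tendsto_DFun_nhdsWithin_im_pos_of_lt_neg_one hx) hD₀
  have hdown := tendsto_outerMatrix (α := α)
    (tendsto_add_one_cpow_nhdsWithin_im_neg hx (-(1 : ℂ) / 4))
    (tendsto_add_one_cpow_nhdsWithin_im_neg hx ((1 : ℂ) / 4))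
    (tendsto_DFun_nhdsWithin_im_neg_of_lt_neg_one hx) (inv_ne_zero hD₀)
  refine ⟨_, _, hup.comp (tendsto_ofReal_add_mul_I_nhdsGT x),
    hdown.comp (tendsto_ofReal_sub_mul_I_nhdsGT x), ?_⟩
  have hA : exp (-(2 * π * I * (-(1 : ℂ) / 4))) = I := by
    rw [show -(2 * π * I * (-(1 : ℂ) / 4)) = π / 2 * I by ring, exp_pi_div_two_mul_I]
  have hB : exp (-(2 * π * I * ((1 : ℂ) / 4))) = -I := by
    rw [show -(2 * π * I * ((1 : ℂ) / 4)) = -π / 2 * I by ring, exp_neg_pi_div_two_mul_I]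
  rw [hA, hB]
  exact outerMatrix_eq_mul_jump _ _ _ _

lemma szegoBase_ne_one (z : ℂ) : szegoBase z ≠ 1 := by
  intro h
  rcases eq_or_ne (sqrtShift z - 1) 0 with h0 | h0
  · simp [szegoBase, h0] at h
  · rw [szegoBase, div_eq_one_iff_eq h0] at h
    have : (1 : ℂ) = -1 := by linear_combination h
    norm_num at this

lemma szegoBase_sub_one (hw : sqrtShift z ≠ 1) : szegoBase z - 1 = 2 * (sqrtShift z - 1)⁻¹ := by
  rw [szegoBase]
  field_simp [sub_ne_zero.2 hw]
  ring

lemma tendsto_sqrtShift_cobounded : Tendsto sqrtShift (cobounded ℂ) (cobounded ℂ) := by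
  have h := (tendsto_cpow_ofReal_cobounded (y := 1 / 2) (by norm_num)).comp
    (tendsto_add_const_cobounded (1 : ℂ))
  rwa [ofReal_div, ofReal_one, ofReal_ofNat] at h

lemma tendsto_inv_sqrtShift_sub_one :
    Tendsto (fun z => (sqrtShift z - 1)⁻¹) (cobounded ℂ) (𝓝 0) :=
  tendsto_inv₀_cobounded.comp ((tendsto_sub_const_cobounded 1).comp tendsto_sqrtShift_cobounded)

lemma tendsto_szegoBase_cobounded : Tendsto szegoBase (cobounded ℂ) (𝓝[≠] 1) := by
  refine tendsto_nhdsWithin_iff.2 ⟨?_, Eventually.of_forall szegoBase_ne_one⟩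
  have h := (tendsto_inv_sqrtShift_sub_one.const_mul 2).const_add 1
  rw [mul_zero, add_zero] at h
  refine h.congr' ?_
  filter_upwards [tendsto_sqrtShift_cobounded.eventually_ne_cobounded 1] with z hz
  rw [← szegoBase_sub_one hz, add_sub_cancel]

lemma tendsto_DFun_cobounded : Tendsto (DFun α) (cobounded ℂ) (𝓝 1) := by
  have h := (continuousAt_cpow_const (b := -(α : ℂ) / 2) one_mem_slitPlane).tendsto.comp
    (tendsto_szegoBase_cobounded.mono_right nhdsWithin_le_nhds)
  rwa [one_cpow] at h

lemma tendsto_DFun_sub_inv_div_cobounded :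
    Tendsto (fun z => (DFun α z - (DFun α z)⁻¹) / (szegoBase z - 1)) (cobounded ℂ) (𝓝 (-α)) := by
  have h := (hasDerivAt_iff_tendsto_slope.1 (hasDerivAt_cpow_neg_sub_cpow ((α : ℂ) / 2))).comp
    tendsto_szegoBase_cobounded
  rw [show -2 * ((α : ℂ) / 2) = -α by ring] at h
  refine h.congr fun z => ?_
  rw [Function.comp_apply, slope_def_field, DFun_inv, DFun_eq, neg_div, one_cpow, one_cpow,
    sub_self, sub_zero]

/-- `D - D⁻¹ ≈ -α (r - 1) = -2α / (w - 1)`, and `z^{1/4} (z + 1)^{1/4} = w · z^{1/4} (z + 1)^{-1/4}`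
with the last factor tending to `1`. -/
lemma tendsto_cpow_mul_add_one_cpow_mul_DFun_sub_inv :
    Tendsto (fun z : ℂ => z ^ ((1 : ℂ) / 4) * (z + 1) ^ ((1 : ℂ) / 4) * (DFun α z - (DFun α z)⁻¹))
      (cobounded ℂ ⊓ 𝓟 slitPlane) (𝓝 (-(2 * α))) := by
  have h := ((tendsto_cpow_mul_add_one_cpow_neg ((1 : ℂ) / 4)).mul
    (tendsto_DFun_sub_inv_div_cobounded (α := α) |>.mono_left inf_le_left)).mul
    (((tendsto_inv_sqrtShift_sub_one.mono_left inf_le_left).const_add 1).const_mul 2)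
  rw [show (1 : ℂ) * -α * (2 * (1 + 0)) = -(2 * α) by ring] at h
  refine h.congr' (eventually_inf_principal.2 (Eventually.of_forall fun z hz => ?_))
  have hw := sqrtShift_ne_one hz
  have hroot : (z + 1) ^ ((1 : ℂ) / 4) = (z + 1) ^ (-((1 : ℂ) / 4)) * sqrtShift z := by
    rw [sqrtShift, ← cpow_add _ _ (slitPlane_ne_zero (add_one_mem_slitPlane hz))]
    norm_num
  have hr : szegoBase z - 1 ≠ 0 := sub_ne_zero.2 (szegoBase_ne_one z)
  change _ = z ^ _ * _ * _
  rw [hroot, ← div_mul_cancel₀ (DFun α z - (DFun α z)⁻¹) hr, szegoBase_sub_one hw]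
  field_simp [sub_ne_zero.2 hw]
  ring

theorem tendsto_NFun_mul_cobounded (α : ℝ) :
    Tendsto (fun z : ℂ => NFun α z * ((1 / (Real.sqrt 2 : ℂ)) • !![1, -I; -I, 1]) *
      !![z ^ ((1 : ℂ) / 4), 0; 0, z ^ (-(1 : ℂ) / 4)]) (cobounded ℂ ⊓ 𝓟 slitPlane) (𝓝 1) := by
  simp_rw [NFun_eq_outerMatrix, outerMatrix_mul_mul_eq]
  have hD := (tendsto_DFun_cobounded (α := α)).mono_left (inf_le_left (b := 𝓟 slitPlane))
  have hD' := hD.inv₀ one_ne_zero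
  have hu := tendsto_cpow_mul_add_one_cpow_neg ((1 : ℂ) / 4)
  rw [← neg_div] at hu
  have hv : Tendsto (fun z : ℂ => (z + 1) ^ ((1 : ℂ) / 4) * z ^ (-(1 : ℂ) / 4))
      (cobounded ℂ ⊓ 𝓟 slitPlane) (𝓝 1) := by
    refine (tendsto_cpow_mul_add_one_cpow_neg (-(1 : ℂ) / 4)).congr fun z => ?_
    rw [mul_comm, show -(-(1 : ℂ) / 4) = 1 / 4 by ring]
  have hq : Tendsto (fun z : ℂ => (z + 1) ^ (-(1 : ℂ) / 4) * z ^ (-(1 : ℂ) / 4))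
      (cobounded ℂ ⊓ 𝓟 slitPlane) (𝓝 0) := by
    have h := tendsto_cpow_ofReal_cobounded_nhds_zero (y := -1 / 4) (by norm_num)
    rw [show (((-1 / 4 : ℝ)) : ℂ) = -(1 : ℂ) / 4 by push_cast; ring] at h
    simpa using ((h.comp (tendsto_add_const_cobounded 1)).mul h).mono_left inf_le_left
  convert ((tendsto_matrix_fin_two (hu.mul (hD.add hD')) ((tendsto_const_nhds.mul hq).mul
    (hD'.sub hD)) (tendsto_const_nhds.mul (((tendsto_const_nhds.mul hu).mul (hD.add hD')).add
      tendsto_cpow_mul_add_one_cpow_mul_DFun_sub_inv))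
    (((tendsto_const_nhds.mul hq).mul (hD.sub hD')).add (hv.mul (hD.add hD')))).const_smul
      (1 / 2 : ℂ)) using 2
  ext i j
  fin_cases i <;> fin_cases j <;> norm_num
  ring

end OuterParametrix

theorem NFun_solves_outer_parametrix_RHP_general (α : ℝ) :
    -- analyticity on ℂ ∖ (−∞, 0]
    (∀ i j : Fin 2, AnalyticOnNhd ℂ (fun z => NFun α z i j)
      {z : ℂ | ¬(z.im = 0 ∧ z.re ≤ 0)}) ∧
    -- (i) jump on (−1, 0)
    (∀ x ∈ Ioo (-1 : ℝ) 0, ∃ Np Nm : Matrix (Fin 2) (Fin 2) ℂ,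
      Tendsto (fun ε : ℝ => NFun α ((x : ℂ) + ε * Complex.I)) (𝓝[>] (0 : ℝ)) (𝓝 Np) ∧
      Tendsto (fun ε : ℝ => NFun α ((x : ℂ) - ε * Complex.I)) (𝓝[>] (0 : ℝ)) (𝓝 Nm) ∧
      Np = Nm * !![Complex.exp ((α : ℂ) * Real.pi * Complex.I), 0;
        0, Complex.exp (-((α : ℂ) * Real.pi * Complex.I))]) ∧
    -- (ii) jump on (−∞, −1)
    (∀ x : ℝ, x < -1 → ∃ Np Nm : Matrix (Fin 2) (Fin 2) ℂ,
      Tendsto (fun ε : ℝ => NFun α ((x : ℂ) + ε * Complex.I)) (𝓝[>] (0 : ℝ)) (𝓝 Np) ∧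
      Tendsto (fun ε : ℝ => NFun α ((x : ℂ) - ε * Complex.I)) (𝓝[>] (0 : ℝ)) (𝓝 Nm) ∧
      Np = Nm * !![0, 1; -1, 0]) ∧
    -- (iii) normalization at infinity
    Tendsto
      (fun z : ℂ => NFun α z * ((1 / (Real.sqrt 2 : ℂ)) • !![1, -Complex.I; -Complex.I, 1]) *
        !![z ^ ((1 : ℂ) / 4), 0; 0, z ^ (-(1 : ℂ) / 4)])
      (Filter.comap (fun z : ℂ => ‖z‖) Filter.atTop ⊓ 𝓟 {z : ℂ | ¬(z.im = 0 ∧ z.re ≤ 0)})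
      (𝓝 (1 : Matrix (Fin 2) (Fin 2) ℂ)) := by
  rw [setOf_not_im_eq_zero_and_re_nonpos, comap_norm_atTop]
  exact ⟨OuterParametrix.analyticOnNhd_NFun_apply α, fun _ => OuterParametrix.NFun_jump_of_mem_Ioo,
    fun _ => OuterParametrix.NFun_jump_of_lt_neg_one, OuterParametrix.tendsto_NFun_mul_cobounded α⟩

/-- `N` is analytic on `ℂ ∖ (−∞, 0]` and solves the outer-parametrix
Riemann–Hilbert problem. -/
theorem NFun_solves_outer_parametrix_RHP (α : ℝ) (hα : -1 < α) :
    -- analyticity on ℂ ∖ (−∞, 0]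
    (∀ i j : Fin 2, AnalyticOnNhd ℂ (fun z => NFun α z i j)
      {z : ℂ | ¬(z.im = 0 ∧ z.re ≤ 0)}) ∧
    -- (i) jump on (−1, 0)
    (∀ x ∈ Ioo (-1 : ℝ) 0, ∃ Np Nm : Matrix (Fin 2) (Fin 2) ℂ,
      Tendsto (fun ε : ℝ => NFun α ((x : ℂ) + ε * Complex.I)) (𝓝[>] (0 : ℝ)) (𝓝 Np) ∧
      Tendsto (fun ε : ℝ => NFun α ((x : ℂ) - ε * Complex.I)) (𝓝[>] (0 : ℝ)) (𝓝 Nm) ∧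
      Np = Nm * !![Complex.exp ((α : ℂ) * Real.pi * Complex.I), 0;
        0, Complex.exp (-((α : ℂ) * Real.pi * Complex.I))]) ∧
    -- (ii) jump on (−∞, −1)
    (∀ x : ℝ, x < -1 → ∃ Np Nm : Matrix (Fin 2) (Fin 2) ℂ,
      Tendsto (fun ε : ℝ => NFun α ((x : ℂ) + ε * Complex.I)) (𝓝[>] (0 : ℝ)) (𝓝 Np) ∧
      Tendsto (fun ε : ℝ => NFun α ((x : ℂ) - ε * Complex.I)) (𝓝[>] (0 : ℝ)) (𝓝 Nm) ∧
      Np = Nm * !![0, 1; -1, 0]) ∧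
    -- (iii) normalization at infinity
    Tendsto
      (fun z : ℂ => NFun α z * ((1 / (Real.sqrt 2 : ℂ)) • !![1, -Complex.I; -Complex.I, 1]) *
        !![z ^ ((1 : ℂ) / 4), 0; 0, z ^ (-(1 : ℂ) / 4)])
      (Filter.comap (fun z : ℂ => ‖z‖) Filter.atTop ⊓ 𝓟 {z : ℂ | ¬(z.im = 0 ∧ z.re ≤ 0)})
      (𝓝 (1 : Matrix (Fin 2) (Fin 2) ℂ)) :=
  NFun_solves_outer_parametrix_RHP_general α
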